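/- Let R : [0,1] → Set ℝ assign to each x a nonempty compact interval, and suppose x ↦ max R(x) is strictly increasing. Define the interpretable interval I(y) as the smallest closed interval containing {x ∈ [0,1] : y ∈ R(x)}. Then for any x₀ ∈ [0,1], setting y = max R(x₀), we have min I(y) = x₀. -/

import Mathlib

open Set

theorem StrictMonoOn.isLeast_setOf_mem {α β : Type*} [LinearOrder α] [Preorder β]
    {R : α → Set β} {f : α → β} {s : Set α} (hf : StrictMonoOn f s)
    (hR : ∀ x ∈ s, IsGreatest (R x) (f x)) {x₀ : α} (hx₀ : x₀ ∈ s) :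
    IsLeast {x | x ∈ s ∧ f x₀ ∈ R x} x₀ :=
  ⟨⟨hx₀, (hR x₀ hx₀).1⟩, fun _ ⟨hx, hmem⟩ =>
    not_lt.1 fun hlt => (hf hx hx₀ hlt).not_ge ((hR _ hx).2 hmem)⟩

theorem isGreatest_sSup_of_eq_Icc {β : Type*} [ConditionallyCompleteLattice β] {S : Set β}
    {a b : β} (hab : a ≤ b) (hS : S = Icc a b) : IsGreatest S (sSup S) := by
  rw [hS, csSup_Icc hab]
  exact isGreatest_Icc hab

/-- If `R` assigns to each `x ∈ [0,1]` a nonempty compact interval and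
`x ↦ max R x` is strictly increasing on `[0,1]`, then for any `x₀ ∈ [0,1]`, setting
`y = max R x₀`, the left endpoint of the interpretable interval
`I(y)` (the smallest closed interval containing `{x ∈ [0,1] : y ∈ R x}`, so its min is
`sInf {x ∈ [0,1] : y ∈ R x}`) equals `x₀`. -/
theorem stmt1 (R : ℝ → Set ℝ)
    (hR : ∀ x ∈ Set.Icc (0:ℝ) 1, ∃ a b : ℝ, a ≤ b ∧ R x = Set.Icc a b)
    (hmono : StrictMonoOn (fun x => sSup (R x)) (Set.Icc (0:ℝ) 1)) :
    ∀ x₀ ∈ Set.Icc (0:ℝ) 1,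
      sInf {x | x ∈ Set.Icc (0:ℝ) 1 ∧ sSup (R x₀) ∈ R x} = x₀ := by
  intro x₀ hx₀
  have hmax : ∀ x ∈ Icc (0:ℝ) 1, IsGreatest (R x) (sSup (R x)) := fun x hx => by
    obtain ⟨a, b, hab, hRx⟩ := hR x hx
    exact isGreatest_sSup_of_eq_Icc hab hRx
  exact (hmono.isLeast_setOf_mem hmax hx₀).csInf_eq
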